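/- Piecewise linearity and convexity of the value function (Theorem 4, statement 2(a); Sondik): For any finite POMDP with row-stochastic transition matrices P(u), row-stochastic observation matrices B(u), reward vectors r_u, and discount ρ ∈ [0,1), and for every k ≥ 0, there exists a finite nonempty set Γ_k of vectors in ℝ^X such that the value-iteration value function satisfies V_k(π) = max_{γ ∈ Γ_k} γᵀπ for all π ∈ Π(X). In particular, each V_k is convex and piecewise linear on the belief simplex Π(X). -/

import Mathlib

open Finset

/-- Membership in the belief simplex Π(X). -/
def inSimplex {X : ℕ} (π : Fin X → ℝ) : Prop :=
  (∀ i, 0 ≤ π i) ∧ ∑ i, π i = 1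

/-- A matrix is row-stochastic: nonnegative entries, rows summing to one. -/
def rowStochastic {n m : ℕ} (A : Matrix (Fin n) (Fin m) ℝ) : Prop :=
  (∀ i j, 0 ≤ A i j) ∧ ∀ i, ∑ j, A i j = 1

/-- Totally positive of order 2: all 2×2 minors nonnegative. -/
def TP2 {n m : ℕ} (A : Matrix (Fin n) (Fin m) ℝ) : Prop :=
  ∀ i i' : Fin n, ∀ y y' : Fin m, i < i' → y < y' →
    A i y' * A i' y ≤ A i y * A i' y'

/-- Monotone likelihood ratio (MLR) order: `a ≤_r b`. -/
def MLRle {n : ℕ} (a b : Fin n → ℝ) : Prop :=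
  ∀ i j : Fin n, i < j → a j * b i ≤ a i * b j

/-- The last index of `Fin n`. -/
def lastIdx (n : ℕ) [NeZero n] : Fin n :=
  ⟨n - 1, Nat.sub_lt (Nat.pos_of_ne_zero (NeZero.ne n)) Nat.one_pos⟩

/-- One-step predicted belief `Pᵀπ`. -/
noncomputable def bayesPred {X : ℕ} (P : Matrix (Fin X) (Fin X) ℝ) (π : Fin X → ℝ) : Fin X → ℝ :=
  fun j => ∑ i, P i j * π i

/-- Normalization constant σ(π,y) = Σ_j B_{j,y} (Pᵀπ)_j. -/
noncomputable def obsMarg {X Y : ℕ} (B : Matrix (Fin X) (Fin Y) ℝ)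
    (P : Matrix (Fin X) (Fin X) ℝ) (π : Fin X → ℝ) (y : Fin Y) : ℝ :=
  ∑ j, B j y * bayesPred P π j

/-- Bayes belief update T(π,y). -/
noncomputable def bayesT {X Y : ℕ} (B : Matrix (Fin X) (Fin Y) ℝ)
    (P : Matrix (Fin X) (Fin X) ℝ) (π : Fin X → ℝ) (y : Fin Y) : Fin X → ℝ :=
  fun j => B j y * bayesPred P π j / obsMarg B P π y

/-- Value iteration: `V 0 ≡ 0`, `V (k+1) π = max_u [rᵤᵀπ + ρ Σ_y V k (T(π,y,u)) σ(π,y,u)]`. -/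
noncomputable def VI {X Y U : ℕ} [NeZero U]
    (P : Fin U → Matrix (Fin X) (Fin X) ℝ)
    (B : Fin U → Matrix (Fin X) (Fin Y) ℝ)
    (r : Fin U → Fin X → ℝ) (ρ : ℝ) : ℕ → (Fin X → ℝ) → ℝ
  | 0 => fun _ => 0
  | (k+1) => fun π =>
      Finset.univ.sup' Finset.univ_nonempty fun u =>
        (∑ i, r u i * π i) +
          ρ * ∑ y, VI P B r ρ k (bayesT (B u) (P u) π y) * obsMarg (B u) (P u) π y

/-- `Qfun P B r ρ k π u` is the value-iteration Q-function at horizon `k+1`,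
i.e. `Q_{k+1}(π,u) = rᵤᵀπ + ρ Σ_y V_k(T(π,y,u)) σ(π,y,u)`. -/
noncomputable def Qfun {X Y U : ℕ} [NeZero U]
    (P : Fin U → Matrix (Fin X) (Fin X) ℝ)
    (B : Fin U → Matrix (Fin X) (Fin Y) ℝ)
    (r : Fin U → Fin X → ℝ) (ρ : ℝ) (k : ℕ) (π : Fin X → ℝ) (u : Fin U) : ℝ :=
  (∑ i, r u i * π i) +
    ρ * ∑ y, VI P B r ρ k (bayesT (B u) (P u) π y) * obsMarg (B u) (P u) π y

/-- Lehmann precision of the pair `(A, C)` (i.e. `C >_L A`): for all columns `j, l`,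
`g(i) = Σ_{y≤j} A i y − Σ_{y≤l} C i y` changes sign at most once,
from negative to positive, as the row `i` increases. -/
def LehmannPrec {X Y : ℕ} (A C : Matrix (Fin X) (Fin Y) ℝ) : Prop :=
  ∀ j l : Fin Y, ∀ i i' : Fin X, i ≤ i' →
    ((0 ≤ (∑ y ∈ univ.filter (· ≤ j), A i y) - ∑ y ∈ univ.filter (· ≤ l), C i y →
      0 ≤ (∑ y ∈ univ.filter (· ≤ j), A i' y) - ∑ y ∈ univ.filter (· ≤ l), C i' y) ∧
     (0 < (∑ y ∈ univ.filter (· ≤ j), A i y) - ∑ y ∈ univ.filter (· ≤ l), C i y →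
      0 < (∑ y ∈ univ.filter (· ≤ j), A i' y) - ∑ y ∈ univ.filter (· ≤ l), C i' y))

/-- Boundary/absolute-continuity condition (A7) for the pair `(A, C)` (C playing the role of
`B(u+1)`): `A_{i,1} C_{X,1} ≤ C_{i,1} A_{X,1}` and `A_{i,Y} C_{X,Y} ≥ C_{i,Y} A_{X,Y}`. -/
def BoundaryCond {X Y : ℕ} [NeZero X] [NeZero Y] (A C : Matrix (Fin X) (Fin Y) ℝ) : Prop :=
  ∀ i : Fin X,
    A i 0 * C (lastIdx X) 0 ≤ C i 0 * A (lastIdx X) 0 ∧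
    C i (lastIdx Y) * A (lastIdx X) (lastIdx Y) ≤ A i (lastIdx Y) * C (lastIdx X) (lastIdx Y)

/-- Copositive dominance `P1 ⪯ P2`. -/
def CopositiveDom {X : ℕ} (P1 P2 : Matrix (Fin X) (Fin X) ℝ) : Prop :=
  ∀ j j' : Fin X, j'.val = j.val + 1 → ∀ π : Fin X → ℝ, inSimplex π →
    0 ≤ ∑ m, ∑ n, π m *
      ((1/2) * ((P1 m j * P2 n j' - P1 m j' * P2 n j) +
                (P1 n j * P2 m j' - P1 n j' * P2 m j))) * π n

/-- `u` is the largest maximizer of `f` over the action set. -/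
def isLargestArgmax {U : ℕ} (f : Fin U → ℝ) (u : Fin U) : Prop :=
  (∀ v, f v ≤ f u) ∧ ∀ v, f u ≤ f v → v ≤ u

/-!
If `V_k = max_{γ ∈ Γ} γᵀ ·` on the simplex, then, since `T(π,y,u)` is the
normalization of `B_y(u) P(u)ᵀ π` by its mass `σ(π,y,u)`, positive homogeneity gives
`V_k(T(π,y,u)) σ(π,y,u) = max_{γ ∈ Γ} γᵀ B_y(u) P(u)ᵀ π`, linear in `π` under the max (and `0`
when `σ = 0`). A sum over `y` of such maxima is the maximum over all choices `y ↦ γ_y`, so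
`V_{k+1}` is the maximum over `u` and `(γ_y)_y` of the linear functions with coefficient vectors
`r_u + ρ Σ_y P(u) B_y(u) γ_y`, a finite nonempty family.
-/

open Matrix

theorem Finset.sum_sup'_eq_sup'_piFinset {ι M : Type*} [DecidableEq ι] [Fintype ι] {κ : ι → Type*}
    [AddCommMonoid M] [LinearOrder M] [IsOrderedAddMonoid M]
    (t : ∀ i, Finset (κ i)) (ht : ∀ i, (t i).Nonempty) (f : ∀ i, κ i → M) :
    ∑ i, (t i).sup' (ht i) (f i) =
      (Fintype.piFinset t).sup' (Fintype.piFinset_nonempty.2 ht) fun g => ∑ i, f i (g i) := by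
  refine le_antisymm ?_ (Finset.sup'_le _ _ fun g hg => Finset.sum_le_sum fun i _ =>
    Finset.le_sup' (f i) (Fintype.mem_piFinset.1 hg i))
  choose g hg hfg using fun i => Finset.exists_mem_eq_sup' (ht i) (f i)
  calc ∑ i, (t i).sup' (ht i) (f i) = ∑ i, f i (g i) := Finset.sum_congr rfl fun i _ => hfg i
    _ ≤ _ := Finset.le_sup' (fun g => ∑ i, f i (g i)) (Fintype.mem_piFinset.2 hg)

theorem apply_div_sum_mul_sum_eq_sup' {X : ℕ} {V : (Fin X → ℝ) → ℝ} {Γ : Finset (Fin X → ℝ)}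
    (hΓ : Γ.Nonempty) (hV : ∀ π, inSimplex π → V π = Γ.sup' hΓ (· ⬝ᵥ π))
    {v : Fin X → ℝ} (hv : 0 ≤ v) :
    V (fun j => v j / ∑ i, v i) * ∑ i, v i = Γ.sup' hΓ (· ⬝ᵥ v) := by
  rcases (Finset.sum_nonneg fun i _ => hv i).eq_or_lt with hzero | hpos
  -- `∑ v = 0` forces `v = 0`: both sides vanish, whatever junk value `V` takes at `v / 0`.
  · have hv0 : v = 0 := funext fun j =>
      (Finset.sum_eq_zero_iff_of_nonneg fun i _ => hv i).1 hzero.symm j (Finset.mem_univ j)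
    simp [hv0]
  · have hsimplex : inSimplex fun j => v j / ∑ i, v i :=
      ⟨fun j => div_nonneg (hv j) hpos.le, by rw [← Finset.sum_div, div_self hpos.ne']⟩
    rw [hV _ hsimplex, Finset.sup'_mul₀ hpos.le]
    refine Finset.sup'_congr hΓ rfl fun γ _ => ?_
    simp only [dotProduct, Finset.sum_mul, mul_div_assoc', div_mul_cancel₀ _ hpos.ne']

theorem bayesPred_nonneg {X : ℕ} {P : Matrix (Fin X) (Fin X) ℝ} (hP : ∀ i j, 0 ≤ P i j)
    {π : Fin X → ℝ} (hπ : ∀ i, 0 ≤ π i) : 0 ≤ bayesPred P π :=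
  fun j => Finset.sum_nonneg fun i _ => mul_nonneg (hP i j) (hπ i)

theorem bayesPred_eq_transpose_mulVec {X : ℕ} (P : Matrix (Fin X) (Fin X) ℝ) (π : Fin X → ℝ) :
    bayesPred P π = Pᵀ *ᵥ π :=
  rfl

theorem apply_bayesT_mul_obsMarg {X Y : ℕ} {V : (Fin X → ℝ) → ℝ} {Γ : Finset (Fin X → ℝ)}
    (hΓ : Γ.Nonempty) (hV : ∀ π, inSimplex π → V π = Γ.sup' hΓ (· ⬝ᵥ π))
    {P : Matrix (Fin X) (Fin X) ℝ} (hP : ∀ i j, 0 ≤ P i j)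
    {B : Matrix (Fin X) (Fin Y) ℝ} (hB : ∀ j y, 0 ≤ B j y)
    {π : Fin X → ℝ} (hπ : ∀ i, 0 ≤ π i) (y : Fin Y) :
    V (bayesT B P π y) * obsMarg B P π y = Γ.sup' hΓ (· ⬝ᵥ ((fun j => B j y) * bayesPred P π)) :=
  apply_div_sum_mul_sum_eq_sup' hΓ hV fun j => mul_nonneg (hB j y) (bayesPred_nonneg hP hπ j)

/-- Sondik's backup `r + ρ Σ_y P B_y γ_y`, with `B_y = diag (B · y)` acting as a pointwise product. -/
def alphaBackup {X Y : ℕ} (r : Fin X → ℝ) (ρ : ℝ) (P : Matrix (Fin X) (Fin X) ℝ)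
    (B : Matrix (Fin X) (Fin Y) ℝ) (γ : Fin Y → Fin X → ℝ) : Fin X → ℝ :=
  r + ρ • ∑ y, P *ᵥ ((fun j => B j y) * γ y)

theorem alphaBackup_dotProduct {X Y : ℕ} (r : Fin X → ℝ) (ρ : ℝ) (P : Matrix (Fin X) (Fin X) ℝ)
    (B : Matrix (Fin X) (Fin Y) ℝ) (γ : Fin Y → Fin X → ℝ) (π : Fin X → ℝ) :
    alphaBackup r ρ P B γ ⬝ᵥ π = r ⬝ᵥ π + ρ * ∑ y, γ y ⬝ᵥ ((fun j => B j y) * bayesPred P π) := by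
  rw [alphaBackup, add_dotProduct, smul_dotProduct, smul_eq_mul, sum_dotProduct]
  congr 2
  refine Finset.sum_congr rfl fun y _ => ?_
  rw [dotProduct_comm, dotProduct_mulVec, ← mulVec_transpose, dotProduct_comm (γ y)]
  simp only [dotProduct, Pi.mul_apply, bayesPred_eq_transpose_mulVec]
  exact Finset.sum_congr rfl fun j _ => by ring

open Classical in
noncomputable def alphaBackupSet {X Y U : ℕ} (P : Fin U → Matrix (Fin X) (Fin X) ℝ)
    (B : Fin U → Matrix (Fin X) (Fin Y) ℝ) (r : Fin U → Fin X → ℝ) (ρ : ℝ)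
    (Γ : Finset (Fin X → ℝ)) : Finset (Fin X → ℝ) :=
  (Finset.univ ×ˢ Fintype.piFinset fun _ : Fin Y => Γ).image
    fun p => alphaBackup (r p.1) ρ (P p.1) (B p.1) p.2

theorem alphaBackupSet_nonempty {X Y U : ℕ} [NeZero U] (P : Fin U → Matrix (Fin X) (Fin X) ℝ)
    (B : Fin U → Matrix (Fin X) (Fin Y) ℝ) (r : Fin U → Fin X → ℝ) (ρ : ℝ)
    {Γ : Finset (Fin X → ℝ)} (hΓ : Γ.Nonempty) : (alphaBackupSet P B r ρ Γ).Nonempty :=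
  (Finset.univ_nonempty.product (Fintype.piFinset_nonempty.2 fun _ => hΓ)).image _

theorem sup'_alphaBackupSet {X Y U : ℕ} [NeZero U] (P : Fin U → Matrix (Fin X) (Fin X) ℝ)
    (B : Fin U → Matrix (Fin X) (Fin Y) ℝ) (r : Fin U → Fin X → ℝ) (ρ : ℝ)
    {Γ : Finset (Fin X → ℝ)} (hΓ : Γ.Nonempty) (f : (Fin X → ℝ) → ℝ) :
    (alphaBackupSet P B r ρ Γ).sup' (alphaBackupSet_nonempty P B r ρ hΓ) f =
      Finset.univ.sup' Finset.univ_nonempty fun u =>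
        (Fintype.piFinset fun _ : Fin Y => Γ).sup' (Fintype.piFinset_nonempty.2 fun _ => hΓ)
          fun γ => f (alphaBackup (r u) ρ (P u) (B u) γ) := by
  simp only [alphaBackupSet, Finset.sup'_image, Finset.sup'_product_left, Function.comp_def]

theorem VI_succ_eq_sup'_alphaBackupSet {X Y U : ℕ} [NeZero U]
    {P : Fin U → Matrix (Fin X) (Fin X) ℝ} (hP : ∀ u i j, 0 ≤ P u i j)
    {B : Fin U → Matrix (Fin X) (Fin Y) ℝ} (hB : ∀ u j y, 0 ≤ B u j y)
    (r : Fin U → Fin X → ℝ) {ρ : ℝ} (hρ : 0 ≤ ρ) {k : ℕ} {Γ : Finset (Fin X → ℝ)}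
    (hΓ : Γ.Nonempty) (hV : ∀ π, inSimplex π → VI P B r ρ k π = Γ.sup' hΓ (· ⬝ᵥ π))
    {π : Fin X → ℝ} (hπ : inSimplex π) :
    VI P B r ρ (k + 1) π =
      (alphaBackupSet P B r ρ Γ).sup' (alphaBackupSet_nonempty P B r ρ hΓ) (· ⬝ᵥ π) := by
  rw [sup'_alphaBackupSet P B r ρ hΓ]
  refine Finset.sup'_congr Finset.univ_nonempty rfl fun u _ => ?_
  rw [Finset.sum_congr rfl fun y _ => apply_bayesT_mul_obsMarg hΓ hV (hP u) (hB u) hπ.1 y,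
    Finset.sum_sup'_eq_sup'_piFinset _ fun _ => hΓ, Finset.mul₀_sup' hρ, Finset.add_sup']
  exact Finset.sup'_congr _ rfl fun γ _ => (alphaBackup_dotProduct _ _ _ _ γ π).symm

theorem value_function_piecewise_linear_convex_general
    (X Y U : ℕ) [NeZero U]
    (P : Fin U → Matrix (Fin X) (Fin X) ℝ) (hPrs : ∀ u, rowStochastic (P u))
    (B : Fin U → Matrix (Fin X) (Fin Y) ℝ) (hBrs : ∀ u, rowStochastic (B u))
    (r : Fin U → Fin X → ℝ) (ρ : ℝ) (hρ0 : 0 ≤ ρ) :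
    ∀ k : ℕ, ∃ Γ : Finset (Fin X → ℝ), ∃ hΓ : Γ.Nonempty,
      ∀ π : Fin X → ℝ, inSimplex π →
        VI P B r ρ k π = Γ.sup' hΓ (fun γ => ∑ i, γ i * π i) := by
  intro k
  induction k with
  | zero => exact ⟨{0}, Finset.singleton_nonempty 0, fun π _ => by simp [VI]⟩
  | succ k ih =>
    obtain ⟨Γ, hΓ, hV⟩ := ih
    exact ⟨alphaBackupSet P B r ρ Γ, alphaBackupSet_nonempty P B r ρ hΓ, fun π hπ =>
      VI_succ_eq_sup'_alphaBackupSet (fun u => (hPrs u).1) (fun u => (hBrs u).1) r hρ0 hΓ hV hπ⟩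

/-- Theorem 4 (statement 2(a); Sondik): for any finite POMDP, each value-iteration value
function `V_k` is a finite maximum of linear functions on the belief simplex;
in particular it is piecewise linear and convex. -/
theorem value_function_piecewise_linear_convex
    (X Y U : ℕ) [NeZero U]
    (P : Fin U → Matrix (Fin X) (Fin X) ℝ) (hPrs : ∀ u, rowStochastic (P u))
    (B : Fin U → Matrix (Fin X) (Fin Y) ℝ) (hBrs : ∀ u, rowStochastic (B u))
    (r : Fin U → Fin X → ℝ) (ρ : ℝ) (hρ0 : 0 ≤ ρ) (hρ1 : ρ < 1) :
    ∀ k : ℕ, ∃ Γ : Finset (Fin X → ℝ), ∃ hΓ : Γ.Nonempty,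
      ∀ π : Fin X → ℝ, inSimplex π →
        VI P B r ρ k π = Γ.sup' hΓ (fun γ => ∑ i, γ i * π i) :=
  value_function_piecewise_linear_convex_general X Y U P hPrs B hBrs r ρ hρ0
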